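/- Let V be a vector space over ℚ admitting a countable spanning set, let p : V → ℝ be sublinear, let U be a ℚ-linear subspace of V, and let f : U → ℝ be a ℚ-linear map with f(x) ≤ p(x) for all x ∈ U. Then there exists a ℚ-linear map F : V → ℝ such that F(x) = f(x) for all x ∈ U and F(x) ≤ p(x) for all x ∈ V. -/

import Mathlib

/-!
By Zorn's lemma there is a maximal partial ℚ-linear map extending `f` and dominated by `p`; the
supremum of a chain of dominated maps is again dominated. Maximality forces the domain to be all
of `V`: otherwise pick `y` outside it. Subadditivity gives `g x - p (x - y) ≤ p (x' + y) - g x'`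
for all `x, x'` in the domain, and completeness of `ℝ` yields a value `c` in between. Setting the
extension to `c` at `y` keeps it dominated, by positive homogeneity of `p`.
-/

open Submodule

namespace LinearPMap

section

variable {R E F : Type*} [Ring R] [AddCommGroup E] [Module R E] [AddCommGroup F] [Module R F]

theorem sSup_apply_le [LE F] {p : E → F} {c : Set (E →ₗ.[R] F)} (hne : c.Nonempty)
    (hc : DirectedOn (· ≤ ·) c) (hcp : ∀ g ∈ c, ∀ x : g.domain, g x ≤ p x)
    (x : (LinearPMap.sSup c hc).domain) : LinearPMap.sSup c hc x ≤ p x := by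
  obtain ⟨g, hg, hxg⟩ := (mem_domain_sSup_iff hne hc).1 x.2
  exact (LinearPMap.sSup_apply hc hg ⟨x, hxg⟩).trans_le (hcp g hg ⟨x, hxg⟩)

end

section

variable {V : Type*} [AddCommGroup V] [Module ℚ V] {p : V → ℝ}

theorem exists_le_add_and_sub_le (hp_sub : ∀ x y : V, p (x + y) ≤ p x + p y)
    (g : V →ₗ.[ℚ] ℝ) (hg : ∀ x : g.domain, g x ≤ p x) (y : V) :
    ∃ c : ℝ, (∀ x : g.domain, g x + c ≤ p (x + y)) ∧ ∀ x : g.domain, g x - c ≤ p (x - y) := by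
  have key : ∀ x x' : g.domain, g x - p (x - y) ≤ p (x' + y) - g x' := by
    intro x x'
    have hsub := hp_sub (x - y) (x' + y)
    have hdom := hg (x + x')
    rw [sub_add_add_cancel] at hsub
    rw [map_add, coe_add] at hdom
    linarith
  obtain ⟨c, hlow, hupp⟩ := exists_between_of_forall_le (Set.range_nonempty _)
    (Set.range_nonempty _) (by
      rintro _ ⟨x, rfl⟩ _ ⟨x', rfl⟩
      exact key x x')
  refine ⟨c, fun x => ?_, fun x => ?_⟩
  · linarith [hupp ⟨x, rfl⟩]
  · linarith [hlow ⟨x, rfl⟩]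

theorem add_smul_le_of_add_le
    (hp_hom : ∀ c : ℚ, 0 ≤ c → ∀ x : V, p (c • x) = (c : ℝ) * p x)
    {g : V →ₗ.[ℚ] ℝ} {y : V} {c : ℝ} (hc : ∀ x : g.domain, g x + c ≤ p (x + y))
    {r : ℚ} (hr : 0 < r) (x : g.domain) : g x + r • c ≤ p (x + r • y) := by
  have hx : r • (r⁻¹ • x) = x := by rw [smul_smul, mul_inv_cancel₀ hr.ne', one_smul]
  calc g x + r • c = r * (g (r⁻¹ • x) + c) := by
        rw [mul_add, ← Rat.smul_def, ← Rat.smul_def, ← map_smul, hx]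
    _ ≤ r * p (↑(r⁻¹ • x) + y) := by gcongr; exact hc _
    _ = p (x + r • y) := by rw [← hp_hom r hr.le, smul_add, ← Submodule.coe_smul, hx]

theorem supSpanSingleton_apply_le
    (hp_hom : ∀ c : ℚ, 0 ≤ c → ∀ x : V, p (c • x) = (c : ℝ) * p x)
    {g : V →ₗ.[ℚ] ℝ} (hg : ∀ x : g.domain, g x ≤ p x) {y : V} (hy : y ∉ g.domain) {c : ℝ}
    (hc_add : ∀ x : g.domain, g x + c ≤ p (x + y)) (hc_sub : ∀ x : g.domain, g x - c ≤ p (x - y))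
    (z : (g.supSpanSingleton y c hy).domain) : g.supSpanSingleton y c hy z ≤ p z := by
  obtain ⟨z, hz⟩ := z
  obtain ⟨x, hx, _, hry, rfl⟩ := mem_sup.1 hz
  obtain ⟨r, rfl⟩ := mem_span_singleton.1 hry
  rw [supSpanSingleton_apply_mk _ _ _ _ _ hx, RingHom.id_apply]
  rcases lt_trichotomy r 0 with hr | rfl | hr
  · have hc_neg : ∀ x : g.domain, g x + -c ≤ p (x + -y) := by
      simpa only [← sub_eq_add_neg] using hc_sub
    simpa only [neg_smul_neg] using add_smul_le_of_add_le hp_hom hc_neg (neg_pos.2 hr) ⟨x, hx⟩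
  · simpa only [zero_smul, add_zero] using hg ⟨x, hx⟩
  · exact add_smul_le_of_add_le hp_hom hc_add hr ⟨x, hx⟩

theorem exists_gt_of_domain_ne_top
    (hp_hom : ∀ c : ℚ, 0 ≤ c → ∀ x : V, p (c • x) = (c : ℝ) * p x)
    (hp_sub : ∀ x y : V, p (x + y) ≤ p x + p y)
    {g : V →ₗ.[ℚ] ℝ} (hg : ∀ x : g.domain, g x ≤ p x) (hdom : g.domain ≠ ⊤) :
    ∃ h : V →ₗ.[ℚ] ℝ, g < h ∧ ∀ x : h.domain, h x ≤ p x := by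
  obtain ⟨y, hy⟩ : ∃ y, y ∉ g.domain := by
    simpa only [ne_eq, eq_top_iff', not_forall] using hdom
  obtain ⟨c, hc_add, hc_sub⟩ := g.exists_le_add_and_sub_le hp_sub hg y
  refine ⟨g.supSpanSingleton y c hy, lt_of_le_of_ne (g.left_le_sup _ _) fun heq => hy ?_,
    supSpanSingleton_apply_le hp_hom hg hy hc_add hc_sub⟩
  rw [heq, domain_supSpanSingleton]
  exact mem_sup_right (mem_span_singleton_self y)

theorem exists_domain_eq_top_of_le
    (hp_hom : ∀ c : ℚ, 0 ≤ c → ∀ x : V, p (c • x) = (c : ℝ) * p x)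
    (hp_sub : ∀ x y : V, p (x + y) ≤ p x + p y)
    {f : V →ₗ.[ℚ] ℝ} (hf : ∀ x : f.domain, f x ≤ p x) :
    ∃ g : V →ₗ.[ℚ] ℝ, f ≤ g ∧ g.domain = ⊤ ∧ ∀ x : g.domain, g x ≤ p x := by
  obtain ⟨g, hfg, hg⟩ := zorn_le_nonempty₀ {g : V →ₗ.[ℚ] ℝ | ∀ x : g.domain, g x ≤ p x}
    (fun c hcp hchain g hg => ⟨LinearPMap.sSup c hchain.directedOn,
      sSup_apply_le ⟨g, hg⟩ hchain.directedOn hcp, fun _ => LinearPMap.le_sSup _⟩) f hf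
  refine ⟨g, hfg, by_contra fun hdom => ?_, hg.prop⟩
  obtain ⟨h, hgh, hh⟩ := exists_gt_of_domain_ne_top hp_hom hp_sub hg.prop hdom
  exact hgh.ne (hg.eq_of_le hh hgh.le)

end

end LinearPMap

theorem hahn_banach_rat_general (V : Type*) [AddCommGroup V] [Module ℚ V]
    (p : V → ℝ)
    (hp_hom : ∀ c : ℚ, 0 ≤ c → ∀ x : V, p (c • x) = (c : ℝ) * p x)
    (hp_sub : ∀ x y : V, p (x + y) ≤ p x + p y)
    (U : Submodule ℚ V) (f : U →ₗ[ℚ] ℝ)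
    (hf : ∀ x : U, f x ≤ p x) :
    ∃ F : V →ₗ[ℚ] ℝ, (∀ x : U, F x = f x) ∧ ∀ x : V, F x ≤ p x := by
  obtain ⟨g, hfg, hdom, hg⟩ :=
    LinearPMap.exists_domain_eq_top_of_le hp_hom hp_sub (f := ⟨U, f⟩) hf
  refine ⟨g.toFun.comp (LinearEquiv.ofTop _ hdom).symm.toLinearMap, fun x => ?_, fun x => hg _⟩
  exact (hfg.2 rfl).symm

/-- Constructive Hahn–Banach theorem over ℚ-vector spaces with a countable spanning set. -/
theorem hahn_banach_rat (V : Type*) [AddCommGroup V] [Module ℚ V]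
    (hspan : ∃ s : Set V, s.Countable ∧ Submodule.span ℚ s = ⊤)
    (p : V → ℝ)
    (hp_hom : ∀ c : ℚ, 0 ≤ c → ∀ x : V, p (c • x) = (c : ℝ) * p x)
    (hp_sub : ∀ x y : V, p (x + y) ≤ p x + p y)
    (U : Submodule ℚ V) (f : U →ₗ[ℚ] ℝ)
    (hf : ∀ x : U, f x ≤ p x) :
    ∃ F : V →ₗ[ℚ] ℝ, (∀ x : U, F x = f x) ∧ ∀ x : V, F x ≤ p x :=
  hahn_banach_rat_general V p hp_hom hp_sub U f hf
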